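/- arXiv:2310.06354 — 3 statements merged into one kernel-verified Lean document; each statement's English description precedes it below -/
import Mathlib

section
/- Let Δ ≥ 2 and let 𝒮 be a collection (with repetition allowed) of copies of the star K_{1,Δ} on a common vertex set V with |V| = n, where Δ + 1 ≤ n ≤ 2Δ - 2. If 𝒮 is rainbow K_{1,Δ}-free, then |𝒮| ≤ ⌊(n-1)²/4⌋. -/
/-!
Let `C` be the set of the `k` vertices that are centers. If a center `u` had `Δ` stars incident
to it, namely stars centered at `u` together with stars having `u` as a leaf with pairwise distinct
centers, Hall's theorem would pick distinct leaves for them and produce a rainbow star at `u`.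
Hence (stars centered at `u`) + (centers of stars having leaf `u`) + 1 ≤ Δ. On the other hand a
star centered at `v` has at least `Δ - (n - k)` leaves in `C`. Summing both bounds over `C` and
double counting the pairs (center `v`, leaf `w ∈ C`) gives `t + k ≤ k (n - k)`, and
`k (n - 1 - k) ≤ (n - 1)² / 4`.
-/

/-- A copy of the star K_{1,Δ} on the vertex set `V`: a center together with
a set of `Δ` leaves not containing the center. -/
structure StarGraph (V : Type) (Δ : ℕ) where
  center : V
  leaves : Finset V
  card_leaves : leaves.card = Δ
  center_not_mem : center ∉ leaves

/-- `x` and `y` are adjacent in the star `S`. -/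
def StarGraph.Adj {V : Type} {Δ : ℕ} (S : StarGraph V Δ) (x y : V) : Prop :=
  (x = S.center ∧ y ∈ S.leaves) ∨ (y = S.center ∧ x ∈ S.leaves)

/-- The collection `S` has a rainbow star with center `u` and leaf set `L`:
there is an injective (on `L`) assignment of the leaves to members of the
collection such that each edge from `u` to a leaf lies in the assigned star. -/
def IsRainbowStarAt {V : Type} {Δ t : ℕ} (S : Fin t → StarGraph V Δ) (u : V) (L : Finset V) : Prop :=
  u ∉ L ∧ ∃ g : V → Fin t, Set.InjOn g ↑L ∧ ∀ l ∈ L, (S (g l)).Adj u l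

/-- The collection `S` contains a rainbow `K_{1,Δ}`. -/
def HasRainbowStar {V : Type} {Δ t : ℕ} (S : Fin t → StarGraph V Δ) : Prop :=
  ∃ (u : V) (L : Finset V), L.card = Δ ∧ IsRainbowStarAt S u L

open Finset Function

lemma StarGraph.Adj.ne {V : Type} {Δ : ℕ} {S : StarGraph V Δ} {u v : V} (h : S.Adj u v) :
    u ≠ v := by
  rintro rfl
  rcases h with ⟨rfl, h⟩ | ⟨rfl, h⟩ <;> exact S.center_not_mem h

section Collection

variable {V : Type} [DecidableEq V] {Δ t : ℕ} (S : Fin t → StarGraph V Δ)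

def starCenters : Finset V := univ.image fun i => (S i).center

def starsCenteredAt (u : V) : Finset (Fin t) := {i | (S i).center = u}

def centersWithLeaf (u : V) : Finset V :=
  ({i | u ∈ (S i).leaves} : Finset (Fin t)).image fun i => (S i).center

variable {S}

lemma hasRainbowStar_of_injective [Nonempty (Fin t)] {u : V} {I : Finset (Fin t)}
    (hI : #I = Δ) (f : I → V) (hf : Injective f) (hadj : ∀ i : I, (S i).Adj u (f i)) :
    HasRainbowStar S := by
  let g : V → Fin t := Function.extend f Subtype.val fun _ => Classical.arbitrary _
  have hgf (i : I) : g (f i) = i := hf.extend_apply _ _ i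
  refine ⟨u, univ.image f, ?_, ?_, g, ?_, ?_⟩
  · rw [card_image_of_injective _ hf, card_univ, Fintype.card_coe, hI]
  · simpa using fun i => (hadj i).ne.symm
  · simp only [coe_image, coe_univ, Set.image_univ]
    rintro _ ⟨i, rfl⟩ _ ⟨j, rfl⟩ hij
    rw [hgf, hgf] at hij
    rw [Subtype.ext hij]
  · simp only [mem_image, mem_univ, true_and]
    rintro _ ⟨i, rfl⟩
    simpa only [hgf] using hadj i

lemma hasRainbowStar_of_incident [Nonempty (Fin t)] {u : V} {I : Finset (Fin t)} (hI : #I = Δ)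
    (hleaf : ∀ i ∈ I, (S i).center ≠ u → u ∈ (S i).leaves)
    (hinj : Set.InjOn (fun i => (S i).center) {i | i ∈ I ∧ (S i).center ≠ u}) :
    HasRainbowStar S := by
  let N : I → Finset V := fun i =>
    if (S i).center = u then (S i).leaves else {(S i).center}
  have hadj (i : I) {v : V} (hv : v ∈ N i) : (S i).Adj u v := by
    simp only [N] at hv
    split_ifs at hv with hc
    · exact Or.inl ⟨hc.symm, hv⟩
    · exact Or.inr ⟨mem_singleton.mp hv, hleaf i i.2 hc⟩
  have hall (s : Finset I) : #s ≤ #(s.biUnion N) := by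
    by_cases hs : ∃ i ∈ s, (S i).center = u
    · obtain ⟨i, his, hc⟩ := hs
      calc #s ≤ #I := by simpa using card_le_univ s
        _ = #(N i) := by simp [N, hc, hI, (S i).card_leaves]
        _ ≤ #(s.biUnion N) := card_le_card (subset_biUnion_of_mem N his)
    · push Not at hs
      calc #s = #(s.image fun i : I => (S i).center) := by
            refine (card_image_of_injOn fun i hi j hj hij => Subtype.ext ?_).symm
            exact hinj ⟨i.2, hs i hi⟩ ⟨j.2, hs j hj⟩ hij
        _ ≤ #(s.biUnion N) := by
            refine card_le_card fun v hv => ?_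
            obtain ⟨i, hi, rfl⟩ := mem_image.mp hv
            exact mem_biUnion.mpr ⟨i, hi, by simp [N, hs i hi]⟩
  obtain ⟨f, hf, hfN⟩ := (all_card_le_biUnion_card_iff_exists_injective N).mp hall
  exact hasRainbowStar_of_injective hI f hf fun i => hadj i (hfN i)

lemma mem_centersWithLeaf {u v : V} :
    v ∈ centersWithLeaf S u ↔ ∃ i, u ∈ (S i).leaves ∧ (S i).center = v := by
  simp [centersWithLeaf]

lemma card_starsCenteredAt_add_card_centersWithLeaf_lt (hfree : ¬HasRainbowStar S) {u : V}
    (hu : u ∈ starCenters S) : #(starsCenteredAt S u) + #(centersWithLeaf S u) < Δ := by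
  obtain ⟨i₀, -, -⟩ := mem_image.mp hu
  have : Nonempty (Fin t) := ⟨i₀⟩
  obtain ⟨E, hE, hEinj, hEimage⟩ := exists_subset_injOn_image_eq_of_surjOn
    (f := fun i => (S i).center) {i | u ∈ (S i).leaves} (centersWithLeaf S u)
    fun v hv => by simpa [mem_centersWithLeaf] using hv
  have hcenter {i : Fin t} (hi : i ∈ starsCenteredAt S u) : (S i).center = u := by
    simpa [starsCenteredAt] using hi
  have hdisj : Disjoint (starsCenteredAt S u) E := disjoint_left.mpr fun i hiu hiE =>
    (S i).center_not_mem (hcenter hiu ▸ hE hiE)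
  by_contra! hΔ
  obtain ⟨I, hIsub, hI⟩ := exists_subset_card_eq (s := starsCenteredAt S u ∪ E) (n := Δ) (by
    rwa [card_union_of_disjoint hdisj, ← card_image_of_injOn hEinj, hEimage])
  have hIE {i : Fin t} (hi : i ∈ I) (hc : (S i).center ≠ u) : i ∈ E :=
    (mem_union.mp (hIsub hi)).resolve_left fun h => hc (hcenter h)
  refine hfree (hasRainbowStar_of_incident hI (fun i hi hc => hE (hIE hi hc)) ?_)
  exact hEinj.mono fun i ⟨hi, hc⟩ => hIE hi hc

lemma card_add_card_starCenters_le [Fintype V] (hfree : ¬HasRainbowStar S) :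
    t + #(starCenters S) ≤ #(starCenters S) * (Fintype.card V - #(starCenters S)) := by
  set C := starCenters S
  let r : V → V → Prop := fun v w => v ∈ centersWithLeaf S w
  have ht : t = ∑ v ∈ C, #(starsCenteredAt S v) := by
    have := card_eq_sum_card_image (fun i => (S i).center) (univ : Finset (Fin t))
    rwa [card_univ, Fintype.card_fin] at this
  have hcenter (v : V) (hv : v ∈ C) :
      #(starsCenteredAt S v) + #(C.bipartiteBelow r v) + 1 ≤ Δ := by
    have := card_starsCenteredAt_add_card_centersWithLeaf_lt hfree hv
    have : #(C.bipartiteBelow r v) ≤ #(centersWithLeaf S v) :=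
      card_le_card fun w hw => ((mem_bipartiteBelow r).mp hw).2
    omega
  have hleaves (v : V) (hv : v ∈ C) : Δ + #C ≤ #(C.bipartiteAbove r v) + Fintype.card V := by
    obtain ⟨i, -, rfl⟩ := mem_image.mp hv
    have hsub : (S i).leaves ⊆ C.bipartiteAbove r (S i).center ∪ Cᶜ := by
      intro w hw
      by_cases hwC : w ∈ C
      · exact mem_union_left _
          ((mem_bipartiteAbove r).mpr ⟨hwC, mem_centersWithLeaf.mpr ⟨i, hw, rfl⟩⟩)
      · exact mem_union_right _ (mem_compl.mpr hwC)
    have := (card_le_card hsub).trans (card_union_le _ _)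
    rw [(S i).card_leaves, card_compl] at this
    have := card_le_univ C
    omega
  have hdouble := sum_card_bipartiteAbove_eq_sum_card_bipartiteBelow (s := C) (t := C) r
  have h₁ := sum_le_sum hcenter
  have h₂ := sum_le_sum hleaves
  simp only [sum_add_distrib, sum_const, smul_eq_mul, mul_one] at h₁ h₂
  rw [ht, Nat.mul_sub]
  have := Nat.mul_le_mul_left #C (card_le_univ C)
  omega

end Collection

lemma le_sub_one_sq_div_four {t k n : ℕ} (h : t + k ≤ k * (n - k)) : t ≤ (n - 1) ^ 2 / 4 := by
  obtain rfl | hk := Nat.eq_zero_or_pos k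
  · simp_all
  have hkn : k ≤ n := by
    by_contra! hnk
    rw [Nat.sub_eq_zero_of_le hnk.le, mul_zero] at h
    omega
  have hn : 1 ≤ n := hk.trans_le hkn
  rw [Nat.le_div_iff_mul_le four_pos]
  zify [hkn, hn] at h ⊢
  nlinarith [sq_nonneg ((n : ℤ) - 1 - 2 * k)]

theorem starGraph_bound_small_n_general {V : Type} [Fintype V]
    (Δ n t : ℕ)
    (hcard : Fintype.card V = n)
    (S : Fin t → StarGraph V Δ) (hfree : ¬ HasRainbowStar S) :
    t ≤ (n - 1) ^ 2 / 4 := by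
  classical
  subst hcard
  exact le_sub_one_sq_div_four (card_add_card_starCenters_le hfree)

theorem starGraph_bound_small_n {V : Type} [Fintype V]
    (Δ n t : ℕ) (hΔ : 2 ≤ Δ)
    (hcard : Fintype.card V = n)
    (hn₁ : Δ + 1 ≤ n) (hn₂ : n ≤ 2 * Δ - 2)
    (S : Fin t → StarGraph V Δ) (hfree : ¬ HasRainbowStar S) :
    t ≤ (n - 1) ^ 2 / 4 :=
  starGraph_bound_small_n_general Δ n t hcard S hfree
end

section
/- Let Δ ≥ 2 and let 𝒮 be a collection (with repetition allowed) of copies of the star K_{1,Δ} on a common vertex set V with |V| = n = a(2Δ-1) + b, where a, b are nonnegative integers, a ≥ 1, 0 ≤ b ≤ 2Δ-2, and b(Δ-1) = k₁(2Δ-1) + k₂ with k₁, k₂ nonnegative integers and 0 ≤ k₂ < Δ. Let C ⊆ V be the set of vertices that are centers of at least one star of 𝒮. If 𝒮 is rainbow K_{1,Δ}-free and |𝒮| = a(Δ-1)² + k₁(Δ-1), then |C| = a(Δ-1) + k₁. -/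
/-- The number of stars of the collection `S` with center `u` (this is `|𝒮_u|`). -/
noncomputable def centerCount {V : Type} {Δ t : ℕ} (S : Fin t → StarGraph V Δ) (u : V) : ℕ :=
  {i : Fin t | (S i).center = u}.ncard

/-- The in-degree `d⁻(u)`: the number of vertices `x ≠ u` such that `u` is a leaf of
some star of the collection with center `x`. -/
noncomputable def inDeg {V : Type} {Δ t : ℕ} (S : Fin t → StarGraph V Δ) (u : V) : ℕ :=
  {x : V | x ≠ u ∧ ∃ i, (S i).center = x ∧ u ∈ (S i).leaves}.ncard

/-- The set of vertices that are centers of at least one star of the collection. -/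
def centers {V : Type} {Δ t : ℕ} (S : Fin t → StarGraph V Δ) : Set V :=
  {u : V | ∃ i, (S i).center = u}

open Finset

theorem Finset.exists_injective_mem_of_card_le {ι α : Type*} [Fintype ι] [DecidableEq α]
    (s : ι → Finset α) (hs : ∀ i, Fintype.card ι ≤ #(s i)) :
    ∃ f : ι → α, Function.Injective f ∧ ∀ i, f i ∈ s i := by
  refine (all_card_le_biUnion_card_iff_exists_injective s).mp fun I ↦ ?_
  obtain rfl | ⟨i, hi⟩ := I.eq_empty_or_nonempty
  · simp
  · calc #I ≤ Fintype.card ι := card_le_univ I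
      _ ≤ #(s i) := hs i
      _ ≤ #(I.biUnion s) := card_le_card (subset_biUnion_of_mem s hi)

namespace StarGraph

variable {V : Type} {Δ : ℕ}

theorem Adj.ne_s10 {S : StarGraph V Δ} {x y : V} (h : S.Adj x y) : x ≠ y := by
  rintro rfl
  rcases h with ⟨rfl, h⟩ | ⟨rfl, h⟩ <;> exact S.center_not_mem h

end StarGraph

section RainbowStar

variable {V : Type} {Δ t : ℕ} (S : Fin t → StarGraph V Δ)

theorem hasRainbowStar_of_injective_s10 {κ : Type*} [Fintype κ] [Nonempty κ]
    (hκ : Fintype.card κ = Δ) (u : V) (i : κ → Fin t) (l : κ → V)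
    (hi : Function.Injective i) (hl : Function.Injective l) (hadj : ∀ k, (S (i k)).Adj u (l k)) :
    HasRainbowStar S := by
  classical
  have hl_inv (k : κ) : Function.invFun l (l k) = k := Function.leftInverse_invFun hl k
  refine ⟨u, univ.image l, by rw [card_image_of_injective _ hl, card_univ, hκ], ?_,
    i ∘ Function.invFun l, ?_, ?_⟩
  · simp only [mem_image, mem_univ, true_and, not_exists]
    exact fun k ↦ (hadj k).ne_s10.symm
  · simp only [coe_image, coe_univ, Set.image_univ]
    rintro _ ⟨k, rfl⟩ _ ⟨k', rfl⟩ h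
    simp only [Function.comp_apply, hl_inv] at h
    rw [hi h]
  · simp only [mem_image, mem_univ, true_and, forall_exists_index, forall_apply_eq_imp_iff]
    intro k
    simpa [hl_inv] using hadj k

end RainbowStar

section Counting

variable {V : Type} [DecidableEq V] {Δ t : ℕ} (S : Fin t → StarGraph V Δ)

theorem centerCount_eq_card (u : V) : centerCount S u = #{i | (S i).center = u} := by
  rw [centerCount, Set.ncard_eq_toFinset_card', Set.toFinset_ofPred]

variable [Fintype V]

theorem inDeg_eq_card (u : V) :
    inDeg S u = #{x | x ≠ u ∧ ∃ i, (S i).center = x ∧ u ∈ (S i).leaves} := by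
  rw [inDeg, Set.ncard_eq_toFinset_card', Set.toFinset_ofPred]

theorem ncard_centers_eq_card : (centers S).ncard = #{u | ∃ i, (S i).center = u} := by
  rw [centers, Set.ncard_eq_toFinset_card', Set.toFinset_ofPred]

/-- If `u` is the centre of `c` stars and the leaf of stars with `d` other centres, where
`c + d ≥ Δ`, then a rainbow star at `u` takes `min d Δ` edges `xu` from the stars centred
at the `x`, and completes them by Hall's theorem with leaves of `Δ - min d Δ` stars
centred at `u`; each of those has `Δ` leaves, so enough remain outside the chosen `x`. -/
theorem centerCount_add_inDeg_lt (hΔ : 1 ≤ Δ) (hfree : ¬ HasRainbowStar S) (u : V) :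
    centerCount S u + inDeg S u < Δ := by
  by_contra! h
  rw [centerCount_eq_card, inDeg_eq_card] at h
  set A : Finset (Fin t) := {i | (S i).center = u}
  set N : Finset V := {x | x ≠ u ∧ ∃ i, (S i).center = x ∧ u ∈ (S i).leaves}
  obtain ⟨X, hXN, hX⟩ := exists_subset_card_eq (min_le_left #N Δ)
  obtain ⟨I, hIA, hI⟩ := exists_subset_card_eq (show Δ - #X ≤ #A by omega)
  have hI_center (i : I) : (S i).center = u := (mem_filter.mp (hIA i.2)).2
  have hX_in (x : X) : x.1 ≠ u ∧ ∃ j, (S j).center = x ∧ u ∈ (S j).leaves :=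
    (mem_filter.mp (hXN x.2)).2
  choose hXu j hj_center hj_leaf using hX_in
  obtain ⟨f, hf, hf_mem⟩ := exists_injective_mem_of_card_le (fun i : I ↦ (S i).leaves \ X)
    fun i ↦ by
      have := le_card_sdiff X (S i).leaves
      rw [(S i).card_leaves] at this
      rw [Fintype.card_coe]
      omega
  simp only [mem_sdiff] at hf_mem
  have hκ : Fintype.card (X ⊕ I) = Δ := by
    simp only [Fintype.card_sum, Fintype.card_coe]; omega
  have : Nonempty (X ⊕ I) := Fintype.card_pos_iff.mp (by omega)
  refine hfree (hasRainbowStar_of_injective_s10 S hκ u (Sum.elim j (↑)) (Sum.elim (↑) f) ?_ ?_ ?_)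
  · refine Function.Injective.sumElim (fun x y hxy ↦ ?_) Subtype.val_injective fun x i hxi ↦ ?_
    · have := congrArg (fun k ↦ (S k).center) hxy
      simpa [hj_center, Subtype.val_inj] using this
    · exact hXu x (by rw [← hj_center x, hxi, hI_center])
  · exact Subtype.val_injective.sumElim hf fun x i hxi ↦ (hf_mem i).2 (hxi ▸ x.2)
  · rintro (x | i)
    · exact Or.inr ⟨(hj_center x).symm, hj_leaf x⟩
    · exact Or.inl ⟨(hI_center i).symm, (hf_mem i).1⟩

theorem sum_centerCount : ∑ u, centerCount S u = t := by
  simp_rw [centerCount_eq_card]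
  rw [← card_eq_sum_card_fiberwise (fun i _ ↦ mem_univ (S i).center), card_univ,
    Fintype.card_fin]

theorem card_le_mul_ncard_centers (hΔ : 1 ≤ Δ) (hfree : ¬ HasRainbowStar S) :
    t ≤ (Δ - 1) * (centers S).ncard := by
  have hC : ∀ u ∉ ({u | ∃ i, (S i).center = u} : Finset V), centerCount S u = 0 := by
    intro u hu
    simp only [mem_filter, mem_univ, true_and] at hu
    simpa [centerCount_eq_card, filter_eq_empty_iff] using hu
  calc t = ∑ u, centerCount S u := (sum_centerCount S).symm
    _ = ∑ u ∈ {u | ∃ i, (S i).center = u}, centerCount S u :=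
        (sum_subset (subset_univ _) fun u _ ↦ hC u).symm
    _ ≤ ∑ u ∈ {u | ∃ i, (S i).center = u}, (Δ - 1) :=
        sum_le_sum fun u _ ↦ by have := centerCount_add_inDeg_lt S hΔ hfree u; omega
    _ = (Δ - 1) * (centers S).ncard := by
        rw [sum_const, smul_eq_mul, mul_comm, ncard_centers_eq_card]

/-- Double counting: `∑ u, d⁻(u)` counts the out-neighbours of each centre, among which are the
`Δ` leaves of any of its stars. -/
theorem mul_ncard_centers_le_sum_inDeg : Δ * (centers S).ncard ≤ ∑ u, inDeg S u := by
  simp_rw [inDeg_eq_card, card_filter]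
  rw [sum_comm, ncard_centers_eq_card, mul_comm, ← smul_eq_mul, ← sum_const]
  refine (sum_le_sum fun x hx ↦ ?_).trans (sum_le_sum_of_subset (subset_univ _))
  obtain ⟨i, rfl⟩ := (mem_filter.mp hx).2
  calc Δ = #(S i).leaves := (S i).card_leaves.symm
    _ ≤ #{v | (S i).center ≠ v ∧ ∃ j, (S j).center = (S i).center ∧ v ∈ (S j).leaves} :=
        card_le_card fun v hv ↦ mem_filter.mpr
          ⟨mem_univ v, fun h ↦ (S i).center_not_mem (h ▸ hv), i, rfl, hv⟩
    _ = _ := card_filter _ _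

theorem add_mul_ncard_centers_le (hΔ : 1 ≤ Δ) (hfree : ¬ HasRainbowStar S) :
    t + Δ * (centers S).ncard ≤ Fintype.card V * (Δ - 1) :=
  calc t + Δ * (centers S).ncard ≤ ∑ u, (centerCount S u + inDeg S u) := by
        rw [sum_add_distrib, sum_centerCount]
        exact Nat.add_le_add_left (mul_ncard_centers_le_sum_inDeg S) t
    _ ≤ ∑ _u : V, (Δ - 1) :=
        sum_le_sum fun u _ ↦ by have := centerCount_add_inDeg_lt S hΔ hfree u; omega
    _ = Fintype.card V * (Δ - 1) := by rw [sum_const, card_univ, smul_eq_mul]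

end Counting

theorem centers_card_extremal_small_k2_general {V : Type} [Fintype V]
    (Δ n a b k₁ k₂ t : ℕ) (hΔ : 2 ≤ Δ)
    (hcard : Fintype.card V = n)
    (hn : n = a * (2 * Δ - 1) + b)
    (hbk : b * (Δ - 1) = k₁ * (2 * Δ - 1) + k₂) (hk₂ : k₂ < Δ)
    (S : Fin t → StarGraph V Δ) (hfree : ¬ HasRainbowStar S)
    (hsize : t = a * (Δ - 1) ^ 2 + k₁ * (Δ - 1)) :
    (centers S).ncard = a * (Δ - 1) + k₁ := by
  classical
  have hlow := card_le_mul_ncard_centers S (by omega) hfree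
  have hup := add_mul_ncard_centers_le S (by omega) hfree
  obtain ⟨d, rfl⟩ : ∃ d, Δ = d + 1 := ⟨Δ - 1, by omega⟩
  set c := (centers S).ncard
  simp only [Nat.add_sub_cancel, show 2 * (d + 1) - 1 = 2 * d + 1 by omega] at *
  have hnd : n * d = t + (d + 1) * (a * d + k₁) + k₂ := by rw [hn, hsize, add_mul, hbk]; ring
  have hge : a * d + k₁ ≤ c :=
    Nat.le_of_mul_le_mul_left (by rw [hsize] at hlow; linarith) (by omega : 0 < d)
  have hlt : c < a * d + k₁ + 1 :=
    Nat.lt_of_mul_lt_mul_left (a := d + 1) (by rw [hcard] at hup; nlinarith)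
  omega

theorem centers_card_extremal_small_k2 {V : Type} [Fintype V]
    (Δ n a b k₁ k₂ t : ℕ) (hΔ : 2 ≤ Δ)
    (hcard : Fintype.card V = n)
    (hn : n = a * (2 * Δ - 1) + b) (ha : 1 ≤ a) (hb : b ≤ 2 * Δ - 2)
    (hbk : b * (Δ - 1) = k₁ * (2 * Δ - 1) + k₂) (hk₂ : k₂ < Δ)
    (S : Fin t → StarGraph V Δ) (hfree : ¬ HasRainbowStar S)
    (hsize : t = a * (Δ - 1) ^ 2 + k₁ * (Δ - 1)) :
    (centers S).ncard = a * (Δ - 1) + k₁ :=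
  centers_card_extremal_small_k2_general Δ n a b k₁ k₂ t hΔ hcard hn hbk hk₂ S hfree hsize
end

section
/- Let n ≥ 2 and let 𝒯 = {T₁,…,T_t} be a nonempty collection (with repetition allowed) of trees on a common vertex set V, each T_i having exactly n vertices (V(T_i) ⊆ V). Suppose 𝒯 contains no rainbow tree with n vertices, and let F be a rainbow tree in 𝒯 with the maximum number of vertices among all rainbow trees in 𝒯. Then for every i ∈ [t] such that E(T_i) ∩ E(F) = ∅, we have V(T_i) ∩ V(F) = ∅. -/
/-- `R` is a rainbow tree in the collection `T`: `R` (a subgraph of the complete graph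
on `V`, i.e. a graph on a subset of `V`) is a tree, and there is an injective assignment
of its edges to members of the collection such that each edge lies in the assigned graph. -/
def IsRainbowSubtree {V ι : Type} (T : ι → (⊤ : SimpleGraph V).Subgraph)
    (R : (⊤ : SimpleGraph V).Subgraph) : Prop :=
  R.coe.IsTree ∧
    ∃ g : Sym2 V → ι, Set.InjOn g R.edgeSet ∧ ∀ e ∈ R.edgeSet, e ∈ (T (g e)).edgeSet

/-- The collection `T` contains a rainbow tree with `n` vertices. -/
def HasRainbowTree {V ι : Type} (T : ι → (⊤ : SimpleGraph V).Subgraph) (n : ℕ) : Prop :=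
  ∃ R : (⊤ : SimpleGraph V).Subgraph, IsRainbowSubtree T R ∧ R.verts.ncard = n

/-
Suppose `T i` shares a vertex with `F` but no edge. A rainbow tree with at least `n` vertices
contains one with exactly `n` (grow a subtree inside it one pendant edge at a time), so `F` has
fewer than `n` vertices and the tree `T i` has an edge `ab` with `a ∈ F`, `b ∉ F`. As no edge of
`F` lies in `T i`, colour `i` is unused on `F`, so `F + ab` is a strictly larger rainbow tree.
-/

open SimpleGraph

namespace SimpleGraph.Subgraph

variable {V : Type*} {G : SimpleGraph V}

lemma natCard_edgeSet_coe (H : G.Subgraph) : Nat.card H.coe.edgeSet = H.edgeSet.ncard := by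
  rw [← H.image_coe_edgeSet_coe,
    Set.ncard_image_of_injective _ (Sym2.map.injective Subtype.val_injective), Nat.card_coe_set_eq]

lemma coe_isTree_iff [Finite V] {H : G.Subgraph} :
    H.coe.IsTree ↔ H.Connected ∧ H.edgeSet.ncard + 1 = H.verts.ncard := by
  rw [isTree_iff_connected_and_card, natCard_edgeSet_coe, Nat.card_coe_set_eq,
    Subgraph.connected_iff']

lemma verts_sup_subgraphOfAdj {H : G.Subgraph} {x y : V} (hxy : G.Adj x y) (hx : x ∈ H.verts) :
    (H ⊔ G.subgraphOfAdj hxy).verts = insert y H.verts := by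
  ext z
  simp only [verts_sup, subgraphOfAdj_verts, Set.mem_union, Set.mem_insert_iff,
    Set.mem_singleton_iff]
  grind

lemma edgeSet_sup_subgraphOfAdj (H : G.Subgraph) {x y : V} (hxy : G.Adj x y) :
    (H ⊔ G.subgraphOfAdj hxy).edgeSet = insert s(x, y) H.edgeSet := by
  rw [edgeSet_sup, edgeSet_subgraphOfAdj, Set.union_comm, Set.insert_eq]

lemma mk_notMem_edgeSet_of_notMem_verts {H : G.Subgraph} {x y : V} (hy : y ∉ H.verts) :
    s(x, y) ∉ H.edgeSet :=
  fun h => hy (H.mem_edgeSet.mp h).snd_mem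

lemma Connected.exists_adj_mem_notMem {H : G.Subgraph} (hH : H.Connected) {S : Set V} {u w : V}
    (hu : u ∈ H.verts) (huS : u ∈ S) (hw : w ∈ H.verts) (hwS : w ∉ S) :
    ∃ a b, H.Adj a b ∧ a ∈ S ∧ b ∉ S := by
  obtain ⟨p⟩ := hH.coe.preconnected ⟨u, hu⟩ ⟨w, hw⟩
  obtain ⟨d, -, hdS, hdS'⟩ := p.exists_boundary_dart (Subtype.val ⁻¹' S) huS hwS
  exact ⟨d.fst, d.snd, d.adj, hdS, hdS'⟩

lemma isTree_sup_subgraphOfAdj [Finite V] {H : G.Subgraph} (hH : H.coe.IsTree) {x y : V}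
    (hxy : G.Adj x y) (hx : x ∈ H.verts) (hy : y ∉ H.verts) :
    (H ⊔ G.subgraphOfAdj hxy).coe.IsTree := by
  rw [coe_isTree_iff] at hH ⊢
  refine ⟨connected_sup hH.1.preconnected (subgraphOfAdj_connected hxy).preconnected
    ⟨x, hx, by simp⟩, ?_⟩
  rw [edgeSet_sup_subgraphOfAdj, verts_sup_subgraphOfAdj hxy hx,
    Set.ncard_insert_of_notMem (mk_notMem_edgeSet_of_notMem_verts hy),
    Set.ncard_insert_of_notMem hy, hH.2]

lemma Connected.exists_isTree_le_ncard_eq [Finite V] {H : G.Subgraph} (hH : H.Connected)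
    {k : ℕ} (hk : 1 ≤ k) (hkH : k ≤ H.verts.ncard) :
    ∃ S ≤ H, S.coe.IsTree ∧ S.verts.ncard = k := by
  induction k, hk using Nat.le_induction with
  | base =>
    obtain ⟨v, hv⟩ := hH.nonempty
    exact ⟨G.singletonSubgraph v, (singletonSubgraph_le_iff v H).mpr hv,
      IsTree.coe_singletonSubgraph G v, by simp⟩
  | succ k hk ih =>
    obtain ⟨S, hSH, hS, hSk⟩ := ih (by omega)
    obtain ⟨v, hv⟩ := Set.nonempty_of_ncard_ne_zero (s := S.verts) (by omega)
    obtain ⟨w, hwH, hwS⟩ :=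
      Set.exists_mem_notMem_of_ncard_lt_ncard (show S.verts.ncard < H.verts.ncard by omega)
    obtain ⟨a, b, hab, haS, hbS⟩ := hH.exists_adj_mem_notMem (hSH.1 hv) hv hwH hwS
    refine ⟨S ⊔ G.subgraphOfAdj (H.adj_sub hab), sup_le hSH (subgraphOfAdj_le_of_adj H hab),
      isTree_sup_subgraphOfAdj hS _ haS hbS, ?_⟩
    rw [verts_sup_subgraphOfAdj _ haS, Set.ncard_insert_of_notMem hbS, hSk]

end SimpleGraph.Subgraph

namespace IsRainbowSubtree

variable {V ι : Type} {T : ι → (⊤ : SimpleGraph V).Subgraph}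
  {R : (⊤ : SimpleGraph V).Subgraph}

lemma of_le (hR : IsRainbowSubtree T R) {S : (⊤ : SimpleGraph V).Subgraph} (hS : S.coe.IsTree)
    (hSR : S ≤ R) : IsRainbowSubtree T S := by
  obtain ⟨-, g, hg, hgT⟩ := hR
  have hE : S.edgeSet ⊆ R.edgeSet := Subgraph.edgeSet_mono hSR
  exact ⟨hS, g, hg.mono hE, fun e he => hgT e (hE he)⟩

lemma exists_ncard_eq [Finite V] (hR : IsRainbowSubtree T R) {k : ℕ} (hk : 1 ≤ k)
    (hkR : k ≤ R.verts.ncard) : HasRainbowTree T k := by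
  obtain ⟨S, hSR, hS, hSk⟩ :=
    (Subgraph.connected_iff'.mpr hR.1.connected).exists_isTree_le_ncard_eq hk hkR
  exact ⟨S, hR.of_le hS hSR, hSk⟩

lemma sup_subgraphOfAdj [Finite V] [DecidableEq V] (hR : IsRainbowSubtree T R) {x y : V}
    (hxy : (⊤ : SimpleGraph V).Adj x y) (hx : x ∈ R.verts) (hy : y ∉ R.verts) {i : ι}
    (hi : s(x, y) ∈ (T i).edgeSet) (hfresh : Disjoint (T i).edgeSet R.edgeSet) :
    IsRainbowSubtree T (R ⊔ (⊤ : SimpleGraph V).subgraphOfAdj hxy) := by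
  obtain ⟨hRtree, g, hg, hgT⟩ := hR
  have hxy_new : s(x, y) ∉ R.edgeSet := Subgraph.mk_notMem_edgeSet_of_notMem_verts hy
  have hupdate : ∀ e ∈ R.edgeSet, Function.update g s(x, y) i e = g e := fun e he =>
    Function.update_of_ne (ne_of_mem_of_not_mem he hxy_new) _ _
  refine ⟨Subgraph.isTree_sup_subgraphOfAdj hRtree hxy hx hy, Function.update g s(x, y) i,
    ?_, ?_⟩
  · rw [Subgraph.edgeSet_sup_subgraphOfAdj, Set.injOn_insert hxy_new, Set.EqOn.injOn_iff hupdate]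
    refine ⟨hg, ?_⟩
    rintro ⟨e, he, hei⟩
    rw [hupdate e he, Function.update_self] at hei
    exact hfresh.ne_of_mem (hei ▸ hgT e he) he rfl
  · rw [Subgraph.edgeSet_sup_subgraphOfAdj]
    rintro e (rfl | he)
    · rwa [Function.update_self]
    · rw [hupdate e he]
      exact hgT e he

end IsRainbowSubtree

theorem max_rainbow_tree_vertex_disjoint_general {V : Type} [Fintype V]
    (n t : ℕ) (hn : 2 ≤ n)
    (T : Fin t → (⊤ : SimpleGraph V).Subgraph)
    (htree : ∀ i, (T i).coe.IsTree) (hverts : ∀ i, (T i).verts.ncard = n)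
    (hfree : ¬ HasRainbowTree T n)
    (F : (⊤ : SimpleGraph V).Subgraph)
    (hF : IsRainbowSubtree T F)
    (hmax : ∀ R, IsRainbowSubtree T R → R.verts.ncard ≤ F.verts.ncard) :
    ∀ i, (T i).edgeSet ∩ F.edgeSet = ∅ → (T i).verts ∩ F.verts = ∅ := by
  classical
  intro i hE
  by_contra hne
  obtain ⟨v, hvT, hvF⟩ := Set.nonempty_iff_ne_empty.mpr hne
  have hFn : F.verts.ncard < n := by
    by_contra! h
    exact hfree (hF.exists_ncard_eq (by omega) h)
  obtain ⟨w, hwT, hwF⟩ := Set.exists_mem_notMem_of_ncard_lt_ncard (hverts i ▸ hFn)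
  obtain ⟨a, b, hab, haF, hbF⟩ := (Subgraph.connected_iff'.mpr (htree i).connected)
    |>.exists_adj_mem_notMem hvT hvF hwT hwF
  have hbigger := hmax _ (hF.sup_subgraphOfAdj ((T i).adj_sub hab) haF hbF
    ((T i).mem_edgeSet.mpr hab) (Set.disjoint_iff_inter_eq_empty.mpr hE))
  rw [Subgraph.verts_sup_subgraphOfAdj _ haF, Set.ncard_insert_of_notMem hbF] at hbigger
  omega

theorem max_rainbow_tree_vertex_disjoint {V : Type} [Fintype V]
    (n t : ℕ) (hn : 2 ≤ n) (ht : 1 ≤ t)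
    (T : Fin t → (⊤ : SimpleGraph V).Subgraph)
    (htree : ∀ i, (T i).coe.IsTree) (hverts : ∀ i, (T i).verts.ncard = n)
    (hfree : ¬ HasRainbowTree T n)
    (F : (⊤ : SimpleGraph V).Subgraph)
    (hF : IsRainbowSubtree T F)
    (hmax : ∀ R, IsRainbowSubtree T R → R.verts.ncard ≤ F.verts.ncard) :
    ∀ i, (T i).edgeSet ∩ F.edgeSet = ∅ → (T i).verts ∩ F.verts = ∅ :=
  max_rainbow_tree_vertex_disjoint_general n t hn T htree hverts hfree F hF hmax
end
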